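/- arXiv:1805.07541 — 4 statements merged into one kernel-verified Lean document; each statement's English description precedes it below -/
import Mathlib

section
/- Let W be a real d×m matrix, let r, λ₁, λ₂ be positive real numbers, and set λᵣ = (1 + 1/r)·(λ₁^r · λ₂ · r / 2^r)^{1/(r+1)}. Then the infimum, over all m×m real symmetric positive definite matrices Ω, of (λ₁/2)·tr(W Ω⁻¹ Wᵀ) + λ₂·tr(Ω^r) equals λᵣ · tr((WᵀW)^{r/(r+1)}); equivalently, it equals λᵣ · Σᵢ σᵢ(W)^{2r/(r+1)}, where σᵢ(W) are the singular values of W. -/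
/-!
Put `A = Wᵀ W` and `s = r / (r + 1)`. In an orthonormal eigenbasis of `Ω`, with eigenvalues `cⱼ`,
the objective is `∑ⱼ (λ₁/2) aⱼ / cⱼ + λ₂ cⱼ ^ r`, where `aⱼ` are the diagonal entries of `A` in
that basis, and by weighted AM–GM each summand is at least `λᵣ aⱼ ^ s`. The `aⱼ` are the images of
the eigenvalues `μᵢ` of `A` under a doubly stochastic matrix (the squared entries of an orthogonal
matrix), so concavity of `t ↦ t ^ s` gives `∑ⱼ aⱼ ^ s ≥ ∑ᵢ μᵢ ^ s = tr A ^ s`. Conversely,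
`Ω = g(A)`, with `g(t)` the scalar minimiser for the eigenvalue `t + δ`, has objective at most
`λᵣ ∑ᵢ (μᵢ + δ) ^ s`, which tends to `λᵣ tr A ^ s` as `δ → 0⁺`.
-/

open Matrix

/-- `Wᵀ * W` is Hermitian (symmetric) for a real matrix `W`. -/
lemma isHermitian_transpose_mul {d m : ℕ} (W : Matrix (Fin d) (Fin m) ℝ) :
    (Wᵀ * W).IsHermitian := by
  simpa using Matrix.isHermitian_conjTranspose_mul_self W

/-- The singular values of a real `d × m` matrix `W`: the square roots of the
eigenvalues of the symmetric positive semidefinite matrix `Wᵀ * W`. -/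
noncomputable def singVal {d m : ℕ} (W : Matrix (Fin d) (Fin m) ℝ) (i : Fin m) : ℝ :=
  Real.sqrt ((isHermitian_transpose_mul W).eigenvalues i)

/-- The real power `A ^ p` of a (symmetric) matrix, defined through the spectral
decomposition, i.e. by applying `t ↦ t ^ p` to the eigenvalues (continuous functional
calculus). -/
noncomputable def mpow {m : ℕ} (A : Matrix (Fin m) (Fin m) ℝ) (p : ℝ) :
    Matrix (Fin m) (Fin m) ℝ :=
  cfc (fun t : ℝ => t ^ p) A

open Real

lemma Real.add_one_mul_rpow_mul_le {r b c : ℝ} (hr : 0 ≤ r) (hb : 0 ≤ b) (hc : 0 ≤ c) :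
    (r + 1) * (b ^ r * c) ≤ c ^ (r + 1) + r * b ^ (r + 1) := by
  have hr1 : 0 < r + 1 := by linarith
  have h := geom_mean_le_arith_mean2_weighted (w₁ := 1 / (r + 1)) (w₂ := r / (r + 1))
    (by positivity) (by positivity) (rpow_nonneg hc (r + 1)) (rpow_nonneg hb (r + 1))
    (by field_simp; ring)
  rw [← rpow_mul hc, ← rpow_mul hb, show (r + 1) * (1 / (r + 1)) = 1 by field_simp,
    show (r + 1) * (r / (r + 1)) = r by field_simp, rpow_one] at h
  have := mul_le_mul_of_nonneg_left h hr1.le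
  rw [show (r + 1) * (1 / (r + 1) * c ^ (r + 1) + r / (r + 1) * b ^ (r + 1))
    = c ^ (r + 1) + r * b ^ (r + 1) by field_simp] at this
  linarith [mul_comm c (b ^ r)]

noncomputable def schattenConst (r lam1 lam2 : ℝ) : ℝ :=
  (1 + 1 / r) * (lam1 ^ r * lam2 * r / (2 : ℝ) ^ r) ^ (1 / (r + 1))

noncomputable def scalarObjective (r lam1 lam2 a c : ℝ) : ℝ :=
  lam1 / 2 * (a / c) + lam2 * c ^ r

/-- The minimiser of `c ↦ scalarObjective r lam1 lam2 a c` on `c > 0`, found by setting the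
derivative `-(λ₁/2) a / c² + r λ₂ c ^ (r - 1)` to zero. -/
noncomputable def optimalScale (r lam1 lam2 a : ℝ) : ℝ :=
  (lam1 / (2 * lam2 * r) * a) ^ (1 / (r + 1))

section Scalar

variable {r lam1 lam2 : ℝ}

lemma schattenConst_pos (hr : 0 < r) (h1 : 0 < lam1) (h2 : 0 < lam2) :
    0 < schattenConst r lam1 lam2 := by
  unfold schattenConst
  positivity

lemma schattenConst_eq (hr : 0 < r) (h1 : 0 < lam1) (h2 : 0 < lam2) :
    schattenConst r lam1 lam2 = (r + 1) * lam2 * (lam1 / (2 * lam2 * r)) ^ (r / (r + 1)) := by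
  unfold schattenConst
  apply log_injOn_pos (Set.mem_Ioi.mpr (by positivity)) (Set.mem_Ioi.mpr (by positivity))
  rw [show (1 : ℝ) + 1 / r = (r + 1) / r by field_simp,
    log_mul (by positivity) (by positivity), log_mul (by positivity) (by positivity),
    log_mul (by positivity) (by positivity), log_rpow (by positivity), log_rpow (by positivity),
    log_div (by positivity) (by positivity), log_div (by positivity) (by positivity),
    log_div (by positivity) (by positivity), log_mul (by positivity) (by positivity),
    log_mul (by positivity) (by positivity), log_mul (by positivity) (by positivity),
    log_rpow h1, log_rpow two_pos]
  field_simp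
  rw [log_mul two_ne_zero h2.ne']
  ring

lemma optimalScale_nonneg (hr : 0 < r) (h1 : 0 ≤ lam1) (h2 : 0 ≤ lam2) {a : ℝ} (ha : 0 ≤ a) :
    0 ≤ optimalScale r lam1 lam2 a := by
  unfold optimalScale
  positivity

lemma optimalScale_pos (hr : 0 < r) (h1 : 0 < lam1) (h2 : 0 < lam2) {a : ℝ} (ha : 0 < a) :
    0 < optimalScale r lam1 lam2 a := by
  unfold optimalScale
  positivity

lemma optimalScale_rpow_add_one (hr : 0 < r) (h1 : 0 ≤ lam1) (h2 : 0 ≤ lam2) {a : ℝ}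
    (ha : 0 ≤ a) : optimalScale r lam1 lam2 a ^ (r + 1) = lam1 / (2 * lam2 * r) * a := by
  have hr1 : 0 < r + 1 := by linarith
  rw [optimalScale, ← rpow_mul (by positivity), one_div_mul_cancel hr1.ne', rpow_one]

lemma schattenConst_mul_rpow (hr : 0 < r) (h1 : 0 < lam1) (h2 : 0 < lam2) {a : ℝ} (ha : 0 ≤ a) :
    schattenConst r lam1 lam2 * a ^ (r / (r + 1))
      = (r + 1) * lam2 * optimalScale r lam1 lam2 a ^ r := by
  rw [schattenConst_eq hr h1 h2, optimalScale, ← rpow_mul (by positivity),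
    mul_rpow (by positivity) ha, one_div_mul_eq_div, mul_assoc]

lemma scalarObjective_eq (hr : 0 < r) (h1 : 0 ≤ lam1) (h2 : 0 < lam2) {a c : ℝ} (ha : 0 ≤ a)
    (hc : 0 < c) :
    scalarObjective r lam1 lam2 a c
      = lam2 * (c ^ (r + 1) + r * optimalScale r lam1 lam2 a ^ (r + 1)) / c := by
  rw [scalarObjective, optimalScale_rpow_add_one hr h1 h2.le ha, rpow_add_one hc.ne']
  field_simp
  ring

lemma schattenConst_mul_rpow_le_scalarObjective (hr : 0 < r) (h1 : 0 < lam1) (h2 : 0 < lam2)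
    {a c : ℝ} (ha : 0 ≤ a) (hc : 0 < c) :
    schattenConst r lam1 lam2 * a ^ (r / (r + 1)) ≤ scalarObjective r lam1 lam2 a c := by
  rw [schattenConst_mul_rpow hr h1 h2 ha, scalarObjective_eq hr h1.le h2 ha hc, le_div_iff₀ hc,
    mul_comm (r + 1) lam2, mul_assoc, mul_assoc]
  gcongr
  exact add_one_mul_rpow_mul_le hr.le (optimalScale_nonneg hr h1.le h2.le ha) hc.le

lemma scalarObjective_optimalScale (hr : 0 < r) (h1 : 0 < lam1) (h2 : 0 < lam2) {a : ℝ}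
    (ha : 0 < a) :
    scalarObjective r lam1 lam2 a (optimalScale r lam1 lam2 a)
      = schattenConst r lam1 lam2 * a ^ (r / (r + 1)) := by
  have hb := optimalScale_pos hr h1 h2 ha
  rw [scalarObjective_eq hr h1.le h2 ha.le hb, schattenConst_mul_rpow hr h1 h2 ha.le,
    rpow_add_one hb.ne']
  field_simp
  ring

end Scalar

lemma ConcaveOn.sum_map_le_sum_map_mulVec {n : Type*} [Fintype n] [DecidableEq n] {s : Set ℝ}
    {f : ℝ → ℝ} (hf : ConcaveOn ℝ s f) {P : Matrix n n ℝ} (hP : P ∈ doublyStochastic ℝ n)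
    {x : n → ℝ} (hx : ∀ i, x i ∈ s) : ∑ i, f (x i) ≤ ∑ j, f ((P *ᵥ x) j) := by
  calc ∑ i, f (x i) = ∑ j, ∑ i, P j i • f (x i) := by
        rw [Finset.sum_comm]
        simp_rw [← Finset.sum_smul, sum_col_of_mem_doublyStochastic hP, one_smul]
    _ ≤ ∑ j, f (∑ i, P j i • x i) := Finset.sum_le_sum fun j _ =>
        hf.le_map_sum (fun i _ => nonneg_of_mem_doublyStochastic hP)
          (sum_row_of_mem_doublyStochastic hP j) fun i _ => hx i
    _ = ∑ j, f ((P *ᵥ x) j) := by simp [mulVec, dotProduct]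

namespace Matrix

variable {n : Type*} [Fintype n] [DecidableEq n]

section RCLike

variable {𝕜 : Type*} [RCLike 𝕜] {A : Matrix n n 𝕜}

lemma trace_mul_diagonal (B : Matrix n n 𝕜) (d : n → 𝕜) :
    (B * diagonal d).trace = ∑ i, B i i * d i := by
  simp [trace, mul_diagonal]

lemma IsHermitian.trace_cfc (hA : A.IsHermitian) (f : ℝ → ℝ) :
    (cfc f A).trace = ∑ i, (f (hA.eigenvalues i) : 𝕜) := by
  rw [hA.cfc_eq, IsHermitian.cfc, Unitary.conjStarAlgAut_apply, trace_mul_cycle,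
    Unitary.coe_star_mul_self, one_mul, trace_diagonal]
  rfl

lemma IsHermitian.trace_mul_cfc (hA : A.IsHermitian) (B : Matrix n n 𝕜) (f : ℝ → ℝ) :
    (B * cfc f A).trace = ∑ i, (star (hA.eigenvectorUnitary : Matrix n n 𝕜) * B *
      hA.eigenvectorUnitary) i i * f (hA.eigenvalues i) := by
  rw [hA.cfc_eq, IsHermitian.cfc, Unitary.conjStarAlgAut_apply, ← mul_assoc, trace_mul_cycle,
    ← mul_assoc, trace_mul_diagonal]
  rfl

lemma IsHermitian.eigenvalues_star_mul_mul (hA : A.IsHermitian) (U : unitary (Matrix n n 𝕜))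
    (hB : (star (U : Matrix n n 𝕜) * A * U).IsHermitian) : hB.eigenvalues = hA.eigenvalues := by
  rw [hB.eigenvalues_eq_eigenvalues_iff hA, charpoly_mul_comm, ← mul_assoc,
    Unitary.mul_star_self_of_mem U.2, one_mul]

end RCLike

lemma sq_entries_mem_doublyStochastic {U : Matrix n n ℝ} (hU : U ∈ unitary (Matrix n n ℝ)) :
    of (fun i j => U i j ^ 2) ∈ doublyStochastic ℝ n := by
  have row (i : n) : ∑ j, U i j ^ 2 = 1 := by
    simpa [mul_apply, sq] using congrArg (fun M => M i i) (Unitary.mul_star_self_of_mem hU)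
  have col (j : n) : ∑ i, U i j ^ 2 = 1 := by
    simpa [mul_apply, sq] using congrArg (fun M => M j j) (Unitary.star_mul_self_of_mem hU)
  exact mem_doublyStochastic_iff_sum.mpr ⟨fun i j => sq_nonneg _, row, col⟩

lemma IsHermitian.diag_eq_mulVec_eigenvalues {A : Matrix n n ℝ} (hA : A.IsHermitian) (j : n) :
    A j j = (of (fun i k => (hA.eigenvectorUnitary : Matrix n n ℝ) i k ^ 2) *ᵥ
      hA.eigenvalues) j := by
  conv_lhs => rw [hA.spectral_theorem]
  simp only [Unitary.conjStarAlgAut_apply, mul_apply, star_apply, mulVec, dotProduct, of_apply,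
    diagonal_apply, mul_ite, mul_zero, Finset.sum_ite_eq', Finset.mem_univ, if_true]
  exact Finset.sum_congr rfl fun i _ => by
    simp only [eigenvectorUnitary_apply, RCLike.ofReal_real_eq_id, Function.comp_apply, id_eq,
      star_trivial]
    ring

lemma IsHermitian.sum_map_eigenvalues_le_sum_map_diag {A : Matrix n n ℝ} (hA : A.IsHermitian)
    {s : Set ℝ} {f : ℝ → ℝ} (hf : ConcaveOn ℝ s f) (hs : ∀ i, hA.eigenvalues i ∈ s) :
    ∑ i, f (hA.eigenvalues i) ≤ ∑ j, f (A j j) := by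
  simp_rw [hA.diag_eq_mulVec_eigenvalues]
  exact hf.sum_map_le_sum_map_mulVec (sq_entries_mem_doublyStochastic hA.eigenvectorUnitary.2) hs

lemma PosDef.inv_eq_cfc {Ω : Matrix n n ℝ} (hΩ : Ω.PosDef) : Ω⁻¹ = cfc (fun t : ℝ => t⁻¹) Ω := by
  rw [nonsing_inv_eq_ringInverse]
  exact (cfc_ringInverse_id Ω hΩ.isUnit hΩ.isHermitian).symm

end Matrix

open scoped MatrixOrder

section Objective

variable {m : ℕ} {r lam1 lam2 : ℝ}

lemma schattenConst_mul_trace_mpow_le (hr : 0 < r) (h1 : 0 < lam1) (h2 : 0 < lam2)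
    {A Ω : Matrix (Fin m) (Fin m) ℝ} (hA : A.PosSemidef) (hΩ : Ω.PosDef) :
    schattenConst r lam1 lam2 * (mpow A (r / (r + 1))).trace
      ≤ lam1 / 2 * (A * Ω⁻¹).trace + lam2 * (mpow Ω r).trace := by
  set V := (hΩ.isHermitian.eigenvectorUnitary : Matrix (Fin m) (Fin m) ℝ)
  set c := hΩ.isHermitian.eigenvalues
  have hB : (star V * A * V).PosSemidef := hA.conjTranspose_mul_mul_same V
  have hconcave := hB.isHermitian.sum_map_eigenvalues_le_sum_map_diag
    (concaveOn_rpow (p := r / (r + 1)) (by positivity)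
      (div_le_one_of_le₀ (by linarith) (by positivity)))
    fun i => hB.eigenvalues_nonneg i
  rw [hA.isHermitian.eigenvalues_star_mul_mul _ hB.isHermitian] at hconcave
  calc schattenConst r lam1 lam2 * (mpow A (r / (r + 1))).trace
      ≤ ∑ j, schattenConst r lam1 lam2 * (star V * A * V) j j ^ (r / (r + 1)) := by
        rw [mpow, hA.isHermitian.trace_cfc, ← Finset.mul_sum]
        exact mul_le_mul_of_nonneg_left hconcave (schattenConst_pos hr h1 h2).le
    _ ≤ ∑ j, scalarObjective r lam1 lam2 ((star V * A * V) j j) (c j) :=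
        Finset.sum_le_sum fun j _ => schattenConst_mul_rpow_le_scalarObjective hr h1 h2
          hB.diag_nonneg (hΩ.eigenvalues_pos j)
    _ = lam1 / 2 * (A * Ω⁻¹).trace + lam2 * (mpow Ω r).trace := by
        rw [hΩ.inv_eq_cfc, hΩ.isHermitian.trace_mul_cfc, mpow, hΩ.isHermitian.trace_cfc,
          Finset.mul_sum, Finset.mul_sum, ← Finset.sum_add_distrib]
        simp [scalarObjective, div_eq_mul_inv, V, c]

lemma exists_posDef_objective_le (hr : 0 < r) (h1 : 0 < lam1) (h2 : 0 < lam2)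
    {A : Matrix (Fin m) (Fin m) ℝ} (hA : A.PosSemidef) {δ : ℝ} (hδ : 0 < δ) :
    ∃ Ω : Matrix (Fin m) (Fin m) ℝ, Ω.PosDef ∧
      lam1 / 2 * (A * Ω⁻¹).trace + lam2 * (mpow Ω r).trace
        ≤ schattenConst r lam1 lam2 * ∑ i, (hA.isHermitian.eigenvalues i + δ) ^ (r / (r + 1)) := by
  set g : ℝ → ℝ := fun t => optimalScale r lam1 lam2 (t + δ)
  have hg : ∀ t ∈ spectrum ℝ A, 0 < g t := fun t ht =>
    optimalScale_pos hr h1 h2 (by linarith [spectrum_nonneg_of_nonneg hA.nonneg ht])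
  have hcont (f : ℝ → ℝ) : ContinuousOn f (spectrum ℝ A) := A.finite_real_spectrum.continuousOn f
  refine ⟨cfc g A, ((cfc_isStrictlyPositive_iff g A (hcont g)).mpr hg).posDef, ?_⟩
  have hinv : A * (cfc g A)⁻¹ = cfc (fun t => t * (g t)⁻¹) A := by
    rw [nonsing_inv_eq_ringInverse, ← cfc_inv g A (fun t ht => (hg t ht).ne') (hcont g),
      cfc_mul _ _ A (hcont _) (hcont _), cfc_id' ℝ A]
  have hpow : mpow (cfc g A) r = cfc (fun t => g t ^ r) A := by
    rw [mpow, ← cfc_comp' _ g A ((A.finite_real_spectrum.image g).continuousOn _) (hcont g)]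
  rw [hinv, hpow, hA.isHermitian.trace_cfc, hA.isHermitian.trace_cfc, Finset.mul_sum,
    Finset.mul_sum, Finset.mul_sum, ← Finset.sum_add_distrib]
  refine Finset.sum_le_sum fun i _ => ?_
  have hμ := hA.eigenvalues_nonneg i
  have hgμ : 0 < g (hA.isHermitian.eigenvalues i) := optimalScale_pos hr h1 h2 (by linarith)
  rw [← scalarObjective_optimalScale hr h1 h2 (by linarith), scalarObjective]
  simp only [RCLike.ofReal_real_eq_id, id, div_eq_mul_inv]
  gcongr
  linarith

lemma isGLB_objective (hr : 0 < r) (h1 : 0 < lam1) (h2 : 0 < lam2)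
    {A : Matrix (Fin m) (Fin m) ℝ} (hA : A.PosSemidef) :
    IsGLB {v | ∃ Ω : Matrix (Fin m) (Fin m) ℝ, Ω.PosDef ∧
        v = lam1 / 2 * (A * Ω⁻¹).trace + lam2 * (mpow Ω r).trace}
      (schattenConst r lam1 lam2 * (mpow A (r / (r + 1))).trace) := by
  refine ⟨?_, fun b hb => ?_⟩
  · rintro v ⟨Ω, hΩ, rfl⟩
    exact schattenConst_mul_trace_mpow_le hr h1 h2 hA hΩ
  · have hcont : Continuous fun δ : ℝ =>
        schattenConst r lam1 lam2 * ∑ i, (hA.isHermitian.eigenvalues i + δ) ^ (r / (r + 1)) :=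
      continuous_const.mul <| continuous_finsetSum _ fun i _ =>
        (continuous_rpow_const (by positivity)).comp (continuous_const.add continuous_id)
    have hlim := (hcont.tendsto 0).mono_left (nhdsWithin_le_nhds (s := Set.Ioi 0))
    rw [mpow, hA.isHermitian.trace_cfc]
    simp only [add_zero] at hlim
    refine ge_of_tendsto hlim (eventually_nhdsWithin_of_forall fun δ hδ => ?_)
    obtain ⟨Ω, hΩ, hle⟩ := exists_posDef_objective_le hr h1 h2 hA hδ
    exact (hb ⟨Ω, hΩ, rfl⟩).trans hle

end Objective

lemma posSemidef_transpose_mul_self {d m : ℕ} (W : Matrix (Fin d) (Fin m) ℝ) :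
    (Wᵀ * W).PosSemidef := by
  simpa using posSemidef_conjTranspose_mul_self W

lemma singVal_rpow_two_mul {d m : ℕ} (W : Matrix (Fin d) (Fin m) ℝ) (i : Fin m) (p : ℝ) :
    singVal W i ^ (2 * p) = (isHermitian_transpose_mul W).eigenvalues i ^ p := by
  rw [singVal, sqrt_eq_rpow, ← rpow_mul ((posSemidef_transpose_mul_self W).eigenvalues_nonneg i),
    show 1 / 2 * (2 * p) = p by ring]

/-- the infimum over symmetric positive definite Ω of
(λ₁/2)·tr(W Ω⁻¹ Wᵀ) + λ₂·tr(Ω^r) equals λᵣ · tr((WᵀW)^{r/(r+1)}), which equals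
λᵣ · Σᵢ σᵢ(W)^{2r/(r+1)}. -/
theorem stmt0 {d m : ℕ} (W : Matrix (Fin d) (Fin m) ℝ) (r lam1 lam2 : ℝ)
    (hr : 0 < r) (h1 : 0 < lam1) (h2 : 0 < lam2) (lamr : ℝ)
    (hlamr : lamr = (1 + 1 / r) * (lam1 ^ r * lam2 * r / (2 : ℝ) ^ r) ^ (1 / (r + 1))) :
    sInf {v : ℝ | ∃ Ω : Matrix (Fin m) (Fin m) ℝ, Ω.PosDef ∧
        v = (lam1 / 2) * (W * Ω⁻¹ * Wᵀ).trace + lam2 * (mpow Ω r).trace}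
      = lamr * (mpow (Wᵀ * W) (r / (r + 1))).trace ∧
    lamr * (mpow (Wᵀ * W) (r / (r + 1))).trace
      = lamr * ∑ i, singVal W i ^ (2 * r / (r + 1)) := by
  have hA := posSemidef_transpose_mul_self W
  refine ⟨?_, ?_⟩
  · simp_rw [trace_mul_cycle W]
    exact hlamr ▸ (isGLB_objective hr h1 h2 hA).csInf_eq ⟨_, 1, PosDef.one, rfl⟩
  · simp_rw [mpow, hA.isHermitian.trace_cfc, mul_div_assoc, singVal_rpow_two_mul]
    rfl
end

section
/- Let W be a real d×m matrix and Ω an m×m real symmetric positive definite matrix. Let μ₁(W) ≥ μ₂(W) ≥ … ≥ μₘ(W) denote the singular values of W in decreasing order and μ₁(Ω) ≥ … ≥ μₘ(Ω) the eigenvalues of Ω in decreasing order. Then tr(Ω⁻¹ WᵀW) ≥ Σᵢ₌₁^m μᵢ(W)² / μᵢ(Ω). -/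
/-!
Diagonalise `Ω = U diag(b) Uᵀ` and `WᵀW = V diag(a) Vᵀ` with orthogonal `U`, `V`.
Then `tr(Ω⁻¹ WᵀW) = ∑ⱼ ∑ₗ b_j⁻¹ P_jl a_l`, where `P_jl = ((UᵀV)_jl)²` is doubly
stochastic. By Birkhoff's theorem `P` is a convex combination of permutation matrices,
so this expression, linear in `P`, is at least `∑ⱼ b_j⁻¹ a_{π j}` for some permutation
`π`. By the rearrangement inequality, that is at least the sum pairing `b⁻¹` in
increasing order with `a` in decreasing order, which is the left-hand side.
-/

open Matrix

lemma Antivary.sum_comp_mul_comp_le_sum_mul_comp {ι α : Type*} [Fintype ι] [Semiring α]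
    [LinearOrder α] [IsStrictOrderedRing α] [ExistsAddOfLE α] {f g : ι → α}
    {σ τ : Equiv.Perm ι} (hfg : Antivary (f ∘ σ) (g ∘ τ)) (π : Equiv.Perm ι) :
    ∑ i, f (σ i) * g (τ i) ≤ ∑ i, f i * g (π i) := by
  calc ∑ i, f (σ i) * g (τ i)
      ≤ ∑ i, f (σ i) * g (τ ((τ.symm * π * σ) i)) :=
        hfg.sum_mul_le_sum_mul_comp_perm (σ := τ.symm * π * σ)
    _ = ∑ i, f i * g (π i) := by
        simpa using Equiv.sum_comp σ (fun i => f i * g (π i))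

namespace Matrix

variable {n : Type*} [Fintype n] [DecidableEq n]

lemma trace_conj_diagonal_mul_conj_diagonal {R : Type*} [CommRing R] (U V : Matrix n n R)
    (x y : n → R) :
    trace (U * diagonal x * Uᵀ * (V * diagonal y * Vᵀ)) =
      x ⬝ᵥ ((Uᵀ * V).map (· ^ 2) *ᵥ y) := by
  have hcyc : trace (U * diagonal x * Uᵀ * (V * diagonal y * Vᵀ)) =
      trace (diagonal x * ((Uᵀ * V) * diagonal y * (Uᵀ * V)ᵀ)) := by
    rw [transpose_mul, transpose_transpose]
    simp only [Matrix.mul_assoc]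
    rw [trace_mul_comm U]
    simp only [Matrix.mul_assoc]
  rw [hcyc]
  generalize Uᵀ * V = Q
  simp only [trace, diag_apply, diagonal_mul]
  refine Finset.sum_congr rfl fun i _ => ?_
  rw [mul_apply]
  simp only [mul_diagonal, transpose_apply, mulVec, dotProduct, map_apply, Finset.mul_sum]
  exact Finset.sum_congr rfl fun j _ => by ring

lemma inv_conj_diagonal {K : Type*} [Field K] {U : Matrix n n K} (hU : U ∈ orthogonalGroup n K)
    {x : n → K} (hx : ∀ i, x i ≠ 0) :
    (U * diagonal x * Uᵀ)⁻¹ = U * diagonal x⁻¹ * Uᵀ := by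
  have hUU : Uᵀ * U = 1 := (mem_orthogonalGroup_iff' n K).mp hU
  have hxx : diagonal x⁻¹ * diagonal x = 1 := by
    rw [diagonal_mul_diagonal, ← diagonal_one]
    exact congrArg diagonal (funext fun i => inv_mul_cancel₀ (hx i))
  apply inv_eq_left_inv
  calc U * diagonal x⁻¹ * Uᵀ * (U * diagonal x * Uᵀ)
      = U * (diagonal x⁻¹ * (Uᵀ * U) * diagonal x) * Uᵀ := by simp only [Matrix.mul_assoc]
    _ = 1 := by
      rw [hUU, Matrix.mul_one, hxx, Matrix.mul_one, (mem_orthogonalGroup_iff n K).mp hU]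

lemma map_sq_mem_doublyStochastic {R : Type*} [CommRing R] [LinearOrder R]
    [IsStrictOrderedRing R] {Q : Matrix n n R} (hQ : Q ∈ orthogonalGroup n R) :
    Q.map (· ^ 2) ∈ doublyStochastic R n := by
  rw [mem_doublyStochastic_iff_sum]
  refine ⟨fun i j => sq_nonneg _, fun i => ?_, fun j => ?_⟩
  · simpa [mul_apply, sq] using congr_fun₂ ((mem_orthogonalGroup_iff n R).mp hQ) i i
  · simpa [mul_apply, sq] using congr_fun₂ ((mem_orthogonalGroup_iff' n R).mp hQ) j j

lemma exists_perm_dotProduct_comp_le_of_mem_doublyStochastic {R : Type*} [Field R]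
    [LinearOrder R] [IsStrictOrderedRing R] {M : Matrix n n R} (hM : M ∈ doublyStochastic R n)
    (x y : n → R) :
    ∃ π : Equiv.Perm n, x ⬝ᵥ (y ∘ π) ≤ x ⬝ᵥ (M *ᵥ y) := by
  let φ : Matrix n n R →ₗ[R] R :=
    { toFun := fun N => x ⬝ᵥ (N *ᵥ y)
      map_add' := fun N N' => by simp [add_mulVec, dotProduct_add]
      map_smul' := fun c N => by simp [smul_mulVec] }
  rw [← SetLike.mem_coe, doublyStochastic_eq_convexHull_permMatrix] at hM
  obtain ⟨-, ⟨π, rfl⟩, hπ⟩ :=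
    (φ.concaveOn convex_univ).exists_le_of_mem_convexHull (Set.subset_univ _) hM
  exact ⟨π, by simpa [φ, permMatrix_mulVec] using hπ⟩

namespace IsHermitian

lemma eq_eigenvectorUnitary_mul_diagonal_mul_transpose {A : Matrix n n ℝ} (hA : A.IsHermitian) :
    A = hA.eigenvectorUnitary * diagonal hA.eigenvalues *
      (hA.eigenvectorUnitary : Matrix n n ℝ)ᵀ := by
  conv_lhs => rw [hA.spectral_theorem]
  simp [Unitary.conjStarAlgAut_apply, star_eq_conjTranspose]

end IsHermitian

namespace PosDef

lemma exists_perm_dotProduct_le_trace_inv_mul {Ω A : Matrix n n ℝ} (hΩ : Ω.PosDef)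
    (hA : A.IsHermitian) :
    ∃ π : Equiv.Perm n,
      hΩ.isHermitian.eigenvalues⁻¹ ⬝ᵥ (hA.eigenvalues ∘ π) ≤ (Ω⁻¹ * A).trace := by
  set U : Matrix n n ℝ := ↑hΩ.isHermitian.eigenvectorUnitary
  set V : Matrix n n ℝ := ↑hA.eigenvectorUnitary
  have hΩinv : Ω⁻¹ = U * diagonal hΩ.isHermitian.eigenvalues⁻¹ * Uᵀ := by
    conv_lhs => rw [hΩ.isHermitian.eq_eigenvectorUnitary_mul_diagonal_mul_transpose]
    exact inv_conj_diagonal hΩ.isHermitian.eigenvectorUnitary.2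
      fun i => (hΩ.eigenvalues_pos i).ne'
  have horth : Uᵀ * V ∈ orthogonalGroup n ℝ := by
    simpa [star_eq_conjTranspose] using Submonoid.mul_mem _
      (Unitary.star_mem hΩ.isHermitian.eigenvectorUnitary.2) hA.eigenvectorUnitary.2
  have htrace : (Ω⁻¹ * A).trace =
      hΩ.isHermitian.eigenvalues⁻¹ ⬝ᵥ ((Uᵀ * V).map (· ^ 2) *ᵥ hA.eigenvalues) := by
    rw [hΩinv]
    conv_lhs => rw [hA.eq_eigenvectorUnitary_mul_diagonal_mul_transpose]
    exact trace_conj_diagonal_mul_conj_diagonal _ _ _ _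
  rw [htrace]
  exact exists_perm_dotProduct_comp_le_of_mem_doublyStochastic
    (map_sq_mem_doublyStochastic horth) _ _

end PosDef

end Matrix

/-- von Neumann-type lower bound: if μW is the decreasing rearrangement of
the singular values of W and μΩ the decreasing rearrangement of the eigenvalues of a
symmetric positive definite Ω, then tr(Ω⁻¹ WᵀW) ≥ Σᵢ μW(i)² / μΩ(i). -/
theorem stmt4 {d m : ℕ} (W : Matrix (Fin d) (Fin m) ℝ)
    (Ω : Matrix (Fin m) (Fin m) ℝ) (hΩ : Ω.PosDef)
    (μW μΩ : Fin m → ℝ)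
    (hμW : ∃ σ : Equiv.Perm (Fin m), μW = singVal W ∘ σ) (hWdec : Antitone μW)
    (hμΩ : ∃ σ : Equiv.Perm (Fin m), μΩ = hΩ.isHermitian.eigenvalues ∘ σ)
    (hΩdec : Antitone μΩ) :
    ∑ i, μW i ^ 2 / μΩ i ≤ (Ω⁻¹ * (Wᵀ * W)).trace := by
  obtain ⟨σ, rfl⟩ := hμW
  obtain ⟨τ, rfl⟩ := hμΩ
  set hA := isHermitian_transpose_mul W
  set a := hA.eigenvalues
  set b := hΩ.isHermitian.eigenvalues
  have hsq : ∀ i, singVal W i ^ 2 = a i := fun i =>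
    Real.sq_sqrt ((posSemidef_conjTranspose_mul_self W).eigenvalues_nonneg i)
  have hantivary : Antivary (b⁻¹ ∘ τ) (a ∘ σ) := by
    refine Monotone.antivary (fun i j hij => ?_) (fun i j hij => ?_)
    · exact inv_anti₀ (hΩ.eigenvalues_pos _) (hΩdec hij)
    · simp only [Function.comp_apply, ← hsq]
      exact pow_le_pow_left₀ (Real.sqrt_nonneg _) (hWdec hij) 2
  obtain ⟨π, hπ⟩ := hΩ.exists_perm_dotProduct_le_trace_inv_mul hA
  calc ∑ i, (singVal W ∘ σ) i ^ 2 / (b ∘ τ) i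
      = ∑ i, (b⁻¹ ∘ τ) i * (a ∘ σ) i := by simp [hsq, div_eq_inv_mul]
    _ ≤ b⁻¹ ⬝ᵥ (a ∘ π) := hantivary.sum_comp_mul_comp_le_sum_mul_comp π
    _ ≤ _ := hπ
end

section
/- Let Φ be an m×m real symmetric matrix with spectral decomposition Φ = U·diag(κ₁, …, κₘ)·Uᵀ (U orthogonal), and let ρ > 0. Then the minimum, over all m×m real symmetric positive semidefinite matrices Ω with tr(Ω) = 1, of ρ·tr(Ω²) + tr(ΦΩ) equals the minimum, over all vectors μ ∈ ℝ^m with μᵢ ≥ 0 and Σᵢ μᵢ = 1, of ρ·‖μ‖₂² + μᵀκ; moreover, if μ* attains the latter minimum then Ω̃ = U·diag(μ*)·Uᵀ attains the former. -/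
/-!
Write `N = Uᵀ Ω U`. Then `tr(ΦΩ) = ∑ κᵢ Nᵢᵢ` and `tr(Ω²) = tr(N²) = ∑ᵢⱼ Nᵢⱼ² ≥ ∑ Nᵢᵢ²`, so for `ρ ≥ 0`
the diagonal of `N`, which lies in the simplex, does at least as well as `Ω`. Conversely
`U diag(μ) Uᵀ` is feasible with exactly the value of `μ`. Each value set therefore dominates the
other from below, so they have the same infimum.
-/

open Matrix

namespace Matrix

variable {n R : Type*} [Fintype n]

theorem IsSymm.sum_diag_sq_le_trace_mul_self [CommRing R] [LinearOrder R] [IsStrictOrderedRing R]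
    {N : Matrix n n R} (hN : N.IsSymm) : ∑ i, N i i ^ 2 ≤ (N * N).trace := by
  simp only [trace, diag, mul_apply]
  refine Finset.sum_le_sum fun i _ => ?_
  calc N i i ^ 2 = N i i * N i i := sq _
    _ ≤ ∑ j, N i j * N j i :=
      Finset.single_le_sum (f := fun j => N i j * N j i)
        (fun j _ => by rw [hN.apply i j]; exact mul_self_nonneg _) (Finset.mem_univ i)

variable [DecidableEq n]

theorem trace_mul_mul_transpose [CommSemiring R] {U : Matrix n n R}
    (hU : Uᵀ * U = 1) (A : Matrix n n R) : (U * A * Uᵀ).trace = A.trace := by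
  rw [trace_mul_cycle, hU, Matrix.one_mul]

theorem mul_mul_transpose_mul_mul_mul_transpose [CommSemiring R] {U : Matrix n n R}
    (hU : Uᵀ * U = 1) (A B : Matrix n n R) :
    U * A * Uᵀ * (U * B * Uᵀ) = U * (A * B) * Uᵀ := by
  simp only [Matrix.mul_assoc, ← Matrix.mul_assoc Uᵀ U, hU, Matrix.one_mul]

end Matrix

variable {n : Type*} [Fintype n]

def traceObjective (ρ : ℝ) (Φ Ω : Matrix n n ℝ) : ℝ :=
  ρ * (Ω * Ω).trace + (Φ * Ω).trace

def simplexObjective (ρ : ℝ) (κ μ : n → ℝ) : ℝ :=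
  ρ * ∑ i, μ i ^ 2 + ∑ i, μ i * κ i

def spectraplex : Set (Matrix n n ℝ) :=
  {Ω | Ω.PosSemidef ∧ Ω.trace = 1}

variable [DecidableEq n] {U : Matrix n n ℝ}

theorem conj_diagonal_mem_spectraplex (hU : Uᵀ * U = 1) {μ : n → ℝ} (hμ : μ ∈ stdSimplex ℝ n) :
    U * diagonal μ * Uᵀ ∈ spectraplex := by
  refine ⟨?_, by rw [trace_mul_mul_transpose hU, trace_diagonal, hμ.2]⟩
  simpa using (PosSemidef.diagonal hμ.1).mul_mul_conjTranspose_same U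

theorem diag_conj_mem_stdSimplex (hU : U * Uᵀ = 1) {Ω : Matrix n n ℝ} (hΩ : Ω ∈ spectraplex) :
    (Uᵀ * Ω * U).diag ∈ stdSimplex ℝ n := by
  have hN : (Uᵀ * Ω * U).PosSemidef := by simpa using hΩ.1.conjTranspose_mul_mul_same U
  refine ⟨fun i => hN.diag_nonneg, ?_⟩
  change (Uᵀ * Ω * U).trace = 1
  rw [trace_mul_cycle, hU, Matrix.one_mul, hΩ.2]

theorem traceObjective_conj_diagonal (hU : Uᵀ * U = 1) (ρ : ℝ) (κ μ : n → ℝ) :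
    traceObjective ρ (U * diagonal κ * Uᵀ) (U * diagonal μ * Uᵀ) = simplexObjective ρ κ μ := by
  simp only [traceObjective, simplexObjective, mul_mul_transpose_mul_mul_mul_transpose hU,
    trace_mul_mul_transpose hU, diagonal_mul_diagonal, trace_diagonal, sq, mul_comm (κ _)]

theorem simplexObjective_diag_le_traceObjective {ρ : ℝ} (hρ : 0 ≤ ρ) (hU : U * Uᵀ = 1)
    {Ω : Matrix n n ℝ} (hΩ : Ω.IsSymm) (κ : n → ℝ) :
    simplexObjective ρ κ (Uᵀ * Ω * U).diag ≤ traceObjective ρ (U * diagonal κ * Uᵀ) Ω := by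
  set N := Uᵀ * Ω * U
  have hN : N.IsSymm := by simp [N, IsSymm, transpose_mul, hΩ.eq, Matrix.mul_assoc]
  have hquad : (N * N).trace = (Ω * Ω).trace := by
    have h := mul_mul_transpose_mul_mul_mul_transpose (U := Uᵀ) (by rwa [transpose_transpose]) Ω Ω
    rw [transpose_transpose] at h
    rw [h, trace_mul_cycle, hU, Matrix.one_mul]
  have hlin : (U * diagonal κ * Uᵀ * Ω).trace = ∑ i, N i i * κ i := by
    have h : (U * diagonal κ * Uᵀ * Ω).trace = (diagonal κ * N).trace := by
      simp only [N, Matrix.mul_assoc]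
      rw [trace_mul_comm U]
      simp only [Matrix.mul_assoc]
    rw [h]
    simp [trace, diagonal_mul, mul_comm]
  unfold simplexObjective traceObjective
  rw [← hquad, hlin]
  gcongr ?_ + _
  exact mul_le_mul_of_nonneg_left hN.sum_diag_sq_le_trace_mul_self hρ

theorem sInf_traceObjective_eq_sInf_simplexObjective {ρ : ℝ} (hρ : 0 ≤ ρ) (hUUt : U * Uᵀ = 1)
    (hUtU : Uᵀ * U = 1) (κ : n → ℝ) :
    sInf {v | ∃ Ω : Matrix n n ℝ, Ω.PosSemidef ∧ Ω.trace = 1 ∧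
        v = traceObjective ρ (U * diagonal κ * Uᵀ) Ω}
      = sInf {v | ∃ μ : n → ℝ, (∀ i, 0 ≤ μ i) ∧ ∑ i, μ i = 1 ∧ v = simplexObjective ρ κ μ} := by
  apply csInf_eq_csInf_of_forall_exists_le
  · rintro _ ⟨Ω, hΩ, htr, rfl⟩
    obtain ⟨h0, h1⟩ := diag_conj_mem_stdSimplex hUUt ⟨hΩ, htr⟩
    exact ⟨_, ⟨_, h0, h1, rfl⟩, simplexObjective_diag_le_traceObjective hρ hUUt
      (isHermitian_iff_isSymm.1 hΩ.isHermitian) κ⟩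
  · rintro _ ⟨μ, h0, h1, rfl⟩
    obtain ⟨hΩ, htr⟩ := conj_diagonal_mem_spectraplex hUtU ⟨h0, h1⟩
    exact ⟨_, ⟨_, hΩ, htr, rfl⟩, (traceObjective_conj_diagonal hUtU ρ κ μ).le⟩

theorem stmt6_general {m : ℕ} (Φ : Matrix (Fin m) (Fin m) ℝ)
    (ρ : ℝ) (hρ : 0 < ρ)
    (U : Matrix (Fin m) (Fin m) ℝ) (κ : Fin m → ℝ)
    (hU : U * Uᵀ = 1 ∧ Uᵀ * U = 1) (hdec : Φ = U * Matrix.diagonal κ * Uᵀ) :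
    sInf {v : ℝ | ∃ Ω : Matrix (Fin m) (Fin m) ℝ, Ω.PosSemidef ∧ Ω.trace = 1 ∧
        v = ρ * (Ω * Ω).trace + (Φ * Ω).trace}
      = sInf {v : ℝ | ∃ μ : Fin m → ℝ, (∀ i, 0 ≤ μ i) ∧ (∑ i, μ i) = 1 ∧
          v = ρ * (∑ i, μ i ^ 2) + ∑ i, μ i * κ i} ∧
    ∀ μstar : Fin m → ℝ, (∀ i, 0 ≤ μstar i) → (∑ i, μstar i) = 1 →
      ρ * (∑ i, μstar i ^ 2) + (∑ i, μstar i * κ i)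
        = sInf {v : ℝ | ∃ μ : Fin m → ℝ, (∀ i, 0 ≤ μ i) ∧ (∑ i, μ i) = 1 ∧
            v = ρ * (∑ i, μ i ^ 2) + ∑ i, μ i * κ i} →
      (U * Matrix.diagonal μstar * Uᵀ).PosSemidef ∧
      (U * Matrix.diagonal μstar * Uᵀ).trace = 1 ∧
      ρ * ((U * Matrix.diagonal μstar * Uᵀ) * (U * Matrix.diagonal μstar * Uᵀ)).trace
          + (Φ * (U * Matrix.diagonal μstar * Uᵀ)).trace
        = sInf {v : ℝ | ∃ Ω : Matrix (Fin m) (Fin m) ℝ, Ω.PosSemidef ∧ Ω.trace = 1 ∧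
            v = ρ * (Ω * Ω).trace + (Φ * Ω).trace} := by
  subst hdec
  have hsInf := sInf_traceObjective_eq_sInf_simplexObjective hρ.le hU.1 hU.2 κ
  refine ⟨hsInf, fun μ hμ0 hμ1 hmin => ?_⟩
  obtain ⟨hpsd, htr⟩ := conj_diagonal_mem_spectraplex hU.2 ⟨hμ0, hμ1⟩
  exact ⟨hpsd, htr, (traceObjective_conj_diagonal hU.2 ρ κ μ).trans (hmin.trans hsInf.symm)⟩

/-- for symmetric Φ = U·diag(κ)·Uᵀ (U orthogonal) and ρ > 0, the minimum of
ρ·tr(Ω²) + tr(ΦΩ) over symmetric PSD Ω with tr(Ω) = 1 equals the minimum of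
ρ·‖μ‖₂² + μᵀκ over the probability simplex; moreover any simplex minimizer μ* yields a
matrix minimizer U·diag(μ*)·Uᵀ. -/
theorem stmt6 {m : ℕ} (Φ : Matrix (Fin m) (Fin m) ℝ) (hΦ : Φ.IsHermitian)
    (ρ : ℝ) (hρ : 0 < ρ)
    (U : Matrix (Fin m) (Fin m) ℝ) (κ : Fin m → ℝ)
    (hU : U * Uᵀ = 1 ∧ Uᵀ * U = 1) (hdec : Φ = U * Matrix.diagonal κ * Uᵀ) :
    sInf {v : ℝ | ∃ Ω : Matrix (Fin m) (Fin m) ℝ, Ω.PosSemidef ∧ Ω.trace = 1 ∧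
        v = ρ * (Ω * Ω).trace + (Φ * Ω).trace}
      = sInf {v : ℝ | ∃ μ : Fin m → ℝ, (∀ i, 0 ≤ μ i) ∧ (∑ i, μ i) = 1 ∧
          v = ρ * (∑ i, μ i ^ 2) + ∑ i, μ i * κ i} ∧
    ∀ μstar : Fin m → ℝ, (∀ i, 0 ≤ μstar i) → (∑ i, μstar i) = 1 →
      ρ * (∑ i, μstar i ^ 2) + (∑ i, μstar i * κ i)
        = sInf {v : ℝ | ∃ μ : Fin m → ℝ, (∀ i, 0 ≤ μ i) ∧ (∑ i, μ i) = 1 ∧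
            v = ρ * (∑ i, μ i ^ 2) + ∑ i, μ i * κ i} →
      (U * Matrix.diagonal μstar * Uᵀ).PosSemidef ∧
      (U * Matrix.diagonal μstar * Uᵀ).trace = 1 ∧
      ρ * ((U * Matrix.diagonal μstar * Uᵀ) * (U * Matrix.diagonal μstar * Uᵀ)).trace
          + (Φ * (U * Matrix.diagonal μstar * Uᵀ)).trace
        = sInf {v : ℝ | ∃ Ω : Matrix (Fin m) (Fin m) ℝ, Ω.PosSemidef ∧ Ω.trace = 1 ∧
            v = ρ * (Ω * Ω).trace + (Φ * Ω).trace} :=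
  stmt6_general Φ ρ hρ U κ hU hdec
end

section
/- Let Φ be an m×m real symmetric matrix with smallest eigenvalue κ_min, and let ρ < 0. Then the minimum, over all m×m real symmetric positive semidefinite matrices Ω with tr(Ω) = 1, of ρ·tr(Ω²) + tr(ΦΩ) equals ρ + κ_min, and it is attained at Ω = u·uᵀ for any unit eigenvector u of Φ with eigenvalue κ_min. -/
/-!
For PSD `Ω` of unit trace with eigenvalues `μᵢ ≥ 0`, `tr(Ω²) = ∑ μᵢ² ≤ (∑ μᵢ)² = 1`, so
`ρ·tr(Ω²) ≥ ρ` because `ρ < 0`. In an orthonormal eigenbasis of `Φ`, `tr(ΦΩ) = ∑ λᵢ Ω'ᵢᵢ` where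
`Ω'` is `Ω` in that basis, again PSD of unit trace; so `tr(ΦΩ)` is a convex combination of the
eigenvalues `λᵢ` of `Φ` and is at least `κ_min`. The rank-one projection `u uᵀ` onto a unit
`κ_min`-eigenvector attains both bounds at once.
-/

open Matrix Unitary Finset

namespace Matrix

variable {n : Type*} [Fintype n]

lemma vecMulVec_mul_self_of_dotProduct_eq_one {R : Type*} [Semiring R] {u v : n → R}
    (h : v ⬝ᵥ u = 1) : vecMulVec u v * vecMulVec u v = vecMulVec u v := by
  rw [vecMulVec_mul_vecMulVec, h, one_smul]

lemma mul_trace_vecMulVec_mul_self_add_trace_mul {R : Type*} [CommSemiring R]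
    {Φ : Matrix n n R} {u : n → R} {κ : R} (ρ : R) (hu : u ⬝ᵥ u = 1) (hΦu : Φ *ᵥ u = κ • u) :
    ρ * (vecMulVec u u * vecMulVec u u).trace + (Φ * vecMulVec u u).trace = ρ + κ := by
  rw [vecMulVec_mul_self_of_dotProduct_eq_one hu, mul_vecMulVec, trace_vecMulVec,
    trace_vecMulVec, hΦu, smul_dotProduct, hu, smul_eq_mul, mul_one, mul_one]

variable [DecidableEq n]

lemma IsHermitian.trace_mul_eq_sum_eigenvalues_mul {𝕜 : Type*} [RCLike 𝕜] {A : Matrix n n 𝕜}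
    (hA : A.IsHermitian) (B : Matrix n n 𝕜) :
    (A * B).trace = ∑ i, (hA.eigenvalues i : 𝕜) *
      (star (hA.eigenvectorUnitary : Matrix n n 𝕜) * B * hA.eigenvectorUnitary) i i := by
  conv_lhs => rw [hA.spectral_theorem, conjStarAlgAut_apply, mul_assoc, trace_mul_cycle,
    trace_mul_comm]
  simp [trace, diagonal_mul]

lemma IsHermitian.trace_mul_self {𝕜 : Type*} [RCLike 𝕜] {A : Matrix n n 𝕜} (hA : A.IsHermitian) :
    (A * A).trace = ∑ i, (hA.eigenvalues i : 𝕜) ^ 2 := by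
  have hdiag := hA.conjStarAlgAut_star_eigenvectorUnitary
  rw [conjStarAlgAut_star_apply] at hdiag
  simp [hA.trace_mul_eq_sum_eigenvalues_mul, hdiag, sq]

lemma IsHermitian.dotProduct_eigenvectorBasis_self {A : Matrix n n ℝ} (hA : A.IsHermitian)
    (i : n) : ⇑(hA.eigenvectorBasis i) ⬝ᵥ ⇑(hA.eigenvectorBasis i) = 1 := by
  have h := hA.eigenvectorBasis.inner_eq_one i
  rwa [EuclideanSpace.inner_eq_star_dotProduct, star_trivial] at h

lemma IsHermitian.mul_trace_le_trace_mul {A B : Matrix n n ℝ} (hA : A.IsHermitian)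
    (hB : B.PosSemidef) {κ : ℝ} (hκ : ∀ i, κ ≤ hA.eigenvalues i) :
    κ * B.trace ≤ (A * B).trace := by
  set U : Matrix n n ℝ := ↑hA.eigenvectorUnitary
  have hUBU : (star U * B * U).PosSemidef := hB.conjTranspose_mul_mul_same U
  have htrace : (star U * B * U).trace = B.trace := by
    rw [trace_mul_cycle, Unitary.mul_star_self_of_mem hA.eigenvectorUnitary.2, one_mul]
  rw [hA.trace_mul_eq_sum_eigenvalues_mul, ← htrace, trace, mul_sum]
  exact sum_le_sum fun i _ => mul_le_mul_of_nonneg_right (hκ i) hUBU.diag_nonneg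

lemma PosSemidef.trace_mul_self_le_sq_trace {A : Matrix n n ℝ} (hA : A.PosSemidef) :
    (A * A).trace ≤ A.trace ^ 2 := by
  rw [hA.isHermitian.trace_mul_self, hA.isHermitian.trace_eq_sum_eigenvalues]
  exact sum_sq_le_sq_sum_of_nonneg fun i _ => hA.eigenvalues_nonneg i

lemma add_le_mul_trace_mul_self_add_trace_mul {Φ Ω : Matrix n n ℝ} (hΦ : Φ.IsHermitian)
    {κ ρ : ℝ} (hκ : ∀ i, κ ≤ hΦ.eigenvalues i) (hρ : ρ ≤ 0) (hΩ : Ω.PosSemidef)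
    (htrace : Ω.trace = 1) :
    ρ + κ ≤ ρ * (Ω * Ω).trace + (Φ * Ω).trace := by
  have hsq : (Ω * Ω).trace ≤ 1 := by simpa [htrace] using hΩ.trace_mul_self_le_sq_trace
  have hlin : κ ≤ (Φ * Ω).trace := by simpa [htrace] using hΦ.mul_trace_le_trace_mul hΩ hκ
  nlinarith

end Matrix

theorem stmt8_general {m : ℕ} (Φ : Matrix (Fin m) (Fin m) ℝ) (hΦ : Φ.IsHermitian)
    (ρ : ℝ) (hρ : ρ < 0)
    (κmin : ℝ) (hκ : IsLeast (Set.range hΦ.eigenvalues) κmin) :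
    sInf {v : ℝ | ∃ Ω : Matrix (Fin m) (Fin m) ℝ, Ω.PosSemidef ∧ Ω.trace = 1 ∧
        v = ρ * (Ω * Ω).trace + (Φ * Ω).trace} = ρ + κmin ∧
    ∀ u : Fin m → ℝ, (∑ i, u i ^ 2) = 1 → Φ.mulVec u = κmin • u →
      (Matrix.vecMulVec u u).PosSemidef ∧ (Matrix.vecMulVec u u).trace = 1 ∧
      ρ * ((Matrix.vecMulVec u u) * (Matrix.vecMulVec u u)).trace
          + (Φ * Matrix.vecMulVec u u).trace = ρ + κmin := by
  have attained : ∀ u : Fin m → ℝ, u ⬝ᵥ u = 1 → Φ *ᵥ u = κmin • u →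
      (vecMulVec u u).PosSemidef ∧ (vecMulVec u u).trace = 1 ∧
      ρ * (vecMulVec u u * vecMulVec u u).trace + (Φ * vecMulVec u u).trace = ρ + κmin :=
    fun u hu hΦu => ⟨by simpa using posSemidef_vecMulVec_self_star u, by simpa using hu,
      mul_trace_vecMulVec_mul_self_add_trace_mul ρ hu hΦu⟩
  refine ⟨IsLeast.csInf_eq ⟨?_, ?_⟩, fun u hu => attained u (by simpa [dotProduct, sq] using hu)⟩
  · obtain ⟨i, hi⟩ := hκ.1
    obtain ⟨hpsd, htrace, hvalue⟩ := attained _ (hΦ.dotProduct_eigenvectorBasis_self i)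
      (by rw [hΦ.mulVec_eigenvectorBasis, hi])
    exact ⟨_, hpsd, htrace, hvalue.symm⟩
  · rintro _ ⟨Ω, hΩ, htrace, rfl⟩
    exact add_le_mul_trace_mul_self_add_trace_mul hΦ (fun i => hκ.2 ⟨i, rfl⟩) hρ.le hΩ htrace

/-- for symmetric Φ with smallest eigenvalue κmin and ρ < 0, the minimum of
ρ·tr(Ω²) + tr(ΦΩ) over symmetric PSD Ω with tr(Ω) = 1 equals ρ + κmin, attained at
Ω = u·uᵀ for any unit eigenvector u of Φ with eigenvalue κmin. -/
theorem stmt8 {m : ℕ} (hm : 0 < m) (Φ : Matrix (Fin m) (Fin m) ℝ) (hΦ : Φ.IsHermitian)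
    (ρ : ℝ) (hρ : ρ < 0)
    (κmin : ℝ) (hκ : IsLeast (Set.range hΦ.eigenvalues) κmin) :
    sInf {v : ℝ | ∃ Ω : Matrix (Fin m) (Fin m) ℝ, Ω.PosSemidef ∧ Ω.trace = 1 ∧
        v = ρ * (Ω * Ω).trace + (Φ * Ω).trace} = ρ + κmin ∧
    ∀ u : Fin m → ℝ, (∑ i, u i ^ 2) = 1 → Φ.mulVec u = κmin • u →
      (Matrix.vecMulVec u u).PosSemidef ∧ (Matrix.vecMulVec u u).trace = 1 ∧
      ρ * ((Matrix.vecMulVec u u) * (Matrix.vecMulVec u u)).trace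
          + (Φ * Matrix.vecMulVec u u).trace = ρ + κmin :=
  stmt8_general Φ hΦ ρ hρ κmin hκ
end
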